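/- Let R be a nontrivial commutative ring ((0 : R) ≠ 1) that is locally finite, i.e., for every finite subset s ⊆ R the subring of R generated by s is finite, and let Σ be an alphabet. Then RevL(R,Σ) equals the Boolean closure of RevL(𝔹,Σ): it is the smallest class of languages over Σ containing every language recognized by a reversible NFA over Σ and closed under finite union, finite intersection, and complement relative to List Σ. -/

import Mathlib

open Matrix

namespace RevWA

/-- A weighted automaton over a semiring `S` and alphabet `α`, given by a linear
representation: number of states `n`, initial weight vector, transition matrices,
and final weight vector. -/
structure WA (S : Type) [Semiring S] (α : Type) where
  n : ℕ
  init : Fin n → S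
  trans : α → Matrix (Fin n) (Fin n) S
  final : Fin n → S

variable {S : Type} [Semiring S] {α : Type}

/-- The matrix associated to a word: product of the transition matrices of its letters. -/
def WA.matWord (A : WA S α) (w : List α) : Matrix (Fin A.n) (Fin A.n) S :=
  (w.map A.trans).prod

/-- The series realized by a weighted automaton: `i ⬝ μ(w) ⬝ f`. -/
def WA.series (A : WA S α) : List α → S :=
  fun w => A.init ⬝ᵥ (A.matWord w).mulVec A.final

/-- A matrix has at most one nonzero entry in each row. -/
def rowOk {n : ℕ} (M : Matrix (Fin n) (Fin n) S) : Prop :=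
  ∀ i j j', M i j ≠ 0 → M i j' ≠ 0 → j = j'

/-- A matrix has at most one nonzero entry in each column. -/
def colOk {n : ℕ} (M : Matrix (Fin n) (Fin n) S) : Prop :=
  ∀ i i' j, M i j ≠ 0 → M i' j ≠ 0 → i = i'

/-- A weighted automaton is reversible if each transition matrix has at most one
nonzero entry in each row and at most one nonzero entry in each column. -/
def WA.Reversible (A : WA S α) : Prop :=
  ∀ a : α, rowOk (A.trans a) ∧ colOk (A.trans a)

/-- A weighted automaton has exactly one initial state. -/
def WA.OneInitial (A : WA S α) : Prop :=
  ∃! q : Fin A.n, A.init q ≠ 0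

/-- `Rev S α`: series realized by reversible weighted automata over `S` and `α`. -/
def Rev (S : Type) [Semiring S] (α : Type) : Set (List α → S) :=
  {r | ∃ A : WA S α, A.Reversible ∧ A.series = r}

/-- `Rev₁ S α`: series realized by reversible weighted automata over `S` and `α`
with exactly one initial state. -/
def Rev1 (S : Type) [Semiring S] (α : Type) : Set (List α → S) :=
  {r | ∃ A : WA S α, A.Reversible ∧ A.OneInitial ∧ A.series = r}

/-- The support of a series. -/
def supp (r : List α → S) : Set (List α) :=
  {w | r w ≠ 0}

/-- `RevL S α`: supports of series realized by reversible weighted automata. -/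
def RevL (S : Type) [Semiring S] (α : Type) : Set (Set (List α)) :=
  {L | ∃ r ∈ Rev S α, supp r = L}

/-- `RevL₁ S α`: supports of series realized by reversible weighted automata with
exactly one initial state. -/
def RevL1 (S : Type) [Semiring S] (α : Type) : Set (Set (List α)) :=
  {L | ∃ r ∈ Rev1 S α, supp r = L}

/-- The characteristic series of a language `L` over `S`. -/
noncomputable def charSeries (S : Type) [Semiring S] {α : Type} (L : Set (List α)) :
    List α → S :=
  L.indicator 1

/-- A reversible nondeterministic finite automaton: deterministic and
codeterministic transition relation. -/
structure RevNFA (α : Type) where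
  Q : Type
  fintypeQ : Fintype Q
  δ : Q → α → Q → Prop
  I : Set Q
  F : Set Q
  det : ∀ p a q q', δ p a q → δ p a q' → q = q'
  codet : ∀ p p' a q, δ p a q → δ p' a q → p = p'

/-- Paths in a reversible NFA. -/
inductive RevNFA.Path {α : Type} (A : RevNFA α) : A.Q → List α → A.Q → Prop
  | nil (q : A.Q) : RevNFA.Path A q [] q
  | cons {p q r : A.Q} {a : α} {w : List α} :
      A.δ p a q → RevNFA.Path A q w r → RevNFA.Path A p (a :: w) r

/-- The language recognized by a reversible NFA. -/
def RevNFA.lang {α : Type} (A : RevNFA α) : Set (List α) :=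
  {w | ∃ p ∈ A.I, ∃ q ∈ A.F, A.Path p w q}

/-- A reversible NFA has exactly one initial state. -/
def RevNFA.OneInitial {α : Type} (A : RevNFA α) : Prop :=
  ∃ q : A.Q, A.I = {q}

/-- `RevL(𝔹,α)`: languages recognized by reversible NFAs. -/
def RevLB (α : Type) : Set (Set (List α)) :=
  {L | ∃ A : RevNFA α, A.lang = L}

/-- `RevL₁(𝔹,α)`: languages recognized by reversible NFAs with exactly one
initial state. -/
def RevL1B (α : Type) : Set (Set (List α)) :=
  {L | ∃ A : RevNFA α, A.OneInitial ∧ A.lang = L}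

end RevWA


namespace RevWA

/-- The Boolean closure of a class `C` of languages over `α`: the smallest class
containing `C` and closed under finite union, finite intersection, and complement
relative to `List α`. -/
inductive BoolClosure {α : Type} (C : Set (Set (List α))) : Set (List α) → Prop
  | base {L : Set (List α)} : L ∈ C → BoolClosure C L
  | empty : BoolClosure C ∅
  | univ : BoolClosure C Set.univ
  | union {L K : Set (List α)} :
      BoolClosure C L → BoolClosure C K → BoolClosure C (L ∪ K)
  | inter {L K : Set (List α)} :
      BoolClosure C L → BoolClosure C K → BoolClosure C (L ∩ K)
  | compl {L : Set (List α)} : BoolClosure C L → BoolClosure C Lᶜ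

end RevWA

/-!
For `⊇`: series realized by reversible weighted automata form a subring of `List α → R` under
pointwise operations (disjoint sum, Kronecker product, negated final vector). The language read
from one initial state of a reversible NFA has its characteristic series realized by the 0/1
automaton of the NFA, and `1_{L ∪ K} = 1_L + 1_K - 1_L 1_K`, `1_{L ∩ K} = 1_L 1_K`,
`1_{Lᶜ} = 1 - 1_L`. So every language of the Boolean closure has its characteristic series in
that subring, and since `0 ≠ 1` its support is the language itself.

For `⊆`: the weights of an automaton generate a finite subring, so `w ↦ μ(w)` takes finitely
many values and the support is a finite Boolean combination of fibres `{w | μ(w) i j = c}`.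
A finite ring embeds into the product of its localizations at maximal ideals, which are finite
local rings. In a finite local ring the non-units form the maximal ideal `m` and `m ^ N = 0`
for some `N`, so a run of nonzero weight meets fewer than `N` non-unit transition weights; a
reversible NFA keeping the product of the unit weights and the list of non-unit weights read so
far recognizes each nonzero fibre, and the zero fibre is the complement of their union.
-/

namespace RevWA

open IsLocalRing

open scoped Kronecker

variable {α : Type}

section BoolClosure

variable {C : Set (Set (List α))}

theorem BoolClosure.biUnion {ι : Type*} {T : Set ι} (hT : T.Finite) {f : ι → Set (List α)}
    (hf : ∀ x ∈ T, BoolClosure C (f x)) : BoolClosure C (⋃ x ∈ T, f x) := by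
  induction T, hT using Set.Finite.induction_on with
  | empty => simpa using BoolClosure.empty
  | @insert x T _ _ ih =>
    rw [Set.biUnion_insert]
    exact .union (hf x (Set.mem_insert x T)) (ih fun y hy => hf y (Set.mem_insert_of_mem x hy))

theorem BoolClosure.biInter {ι : Type*} {T : Set ι} (hT : T.Finite) {f : ι → Set (List α)}
    (hf : ∀ x ∈ T, BoolClosure C (f x)) : BoolClosure C (⋂ x ∈ T, f x) := by
  simpa [Set.compl_iUnion₂] using (BoolClosure.biUnion hT fun x hx => (hf x hx).compl).compl

theorem BoolClosure.preimage {β : Type*} (f : List α → β) {s : Set β} (hs : s.Finite)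
    (hf : ∀ b ∈ s, BoolClosure C (f ⁻¹' {b})) : BoolClosure C (f ⁻¹' s) := by
  rw [← Set.biUnion_preimage_singleton]
  exact .biUnion hs hf

theorem BoolClosure.preimage_singleton {β : Type*} [Finite β] (f : List α → β) (b₀ : β)
    (hf : ∀ b ≠ b₀, BoolClosure C (f ⁻¹' {b})) (b : β) : BoolClosure C (f ⁻¹' {b}) := by
  obtain rfl | hb := eq_or_ne b b₀
  · rw [← compl_compl (f ⁻¹' {b}), ← Set.preimage_compl]
    exact (BoolClosure.preimage f (Set.toFinite _) hf).compl
  · exact hf b hb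

end BoolClosure

section Submonomial

variable {ι κ S S' : Type*}

-- `WA.Reversible A` unfolds to `∀ a, IsSubmonomial (A.trans a)`.
def IsSubmonomial [Zero S] (M : Matrix ι ι S) : Prop :=
  (∀ i j j', M i j ≠ 0 → M i j' ≠ 0 → j = j') ∧ ∀ i i' j, M i j ≠ 0 → M i' j ≠ 0 → i = i'

variable [Zero S] [Zero S'] {M : Matrix ι ι S}

theorem IsSubmonomial.map (hM : IsSubmonomial M) {f : S → S'} (hf : f 0 = 0) :
    IsSubmonomial (M.map f) :=
  have hne {x : S} (h : f x ≠ 0) : x ≠ 0 := fun hx => h (hx ▸ hf)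
  ⟨fun _ _ _ h h' => hM.1 _ _ _ (hne h) (hne h'), fun _ _ _ h h' => hM.2 _ _ _ (hne h) (hne h')⟩

theorem IsSubmonomial.of_map {f : S → S'} (hM : IsSubmonomial (M.map f))
    (hf : ∀ x, f x = 0 → x = 0) : IsSubmonomial M :=
  have hne {x : S} (h : x ≠ 0) : f x ≠ 0 := mt (hf x) h
  ⟨fun _ _ _ h h' => hM.1 _ _ _ (hne h) (hne h'), fun _ _ _ h h' => hM.2 _ _ _ (hne h) (hne h')⟩

theorem IsSubmonomial.submatrix (hM : IsSubmonomial M) (e : κ ≃ ι) :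
    IsSubmonomial (M.submatrix e e) :=
  ⟨fun _ _ _ h h' => e.injective (hM.1 _ _ _ h h'),
    fun _ _ _ h h' => e.injective (hM.2 _ _ _ h h')⟩

theorem isSubmonomial_of_subsingleton [Subsingleton ι] (M : Matrix ι ι S) : IsSubmonomial M :=
  ⟨fun _ _ _ _ _ => Subsingleton.elim _ _, fun _ _ _ _ _ => Subsingleton.elim _ _⟩

theorem IsSubmonomial.fromBlocks (hM : IsSubmonomial M) {N : Matrix κ κ S}
    (hN : IsSubmonomial N) : IsSubmonomial (fromBlocks M 0 0 N) := by
  constructor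
  · rintro (i | i) (j | j) (j' | j') h h' <;>
      simp only [fromBlocks_apply₁₁, fromBlocks_apply₁₂, fromBlocks_apply₂₁, fromBlocks_apply₂₂,
        Matrix.zero_apply, ne_eq, Sum.inl.injEq, Sum.inr.injEq, not_true_eq_false] at h h' ⊢
    exacts [hM.1 _ _ _ h h', hN.1 _ _ _ h h']
  · rintro (i | i) (i' | i') (j | j) h h' <;>
      simp only [fromBlocks_apply₁₁, fromBlocks_apply₁₂, fromBlocks_apply₂₁, fromBlocks_apply₂₂,
        Matrix.zero_apply, ne_eq, Sum.inl.injEq, Sum.inr.injEq, not_true_eq_false] at h h' ⊢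
    exacts [hM.2 _ _ _ h h', hN.2 _ _ _ h h']

theorem IsSubmonomial.kronecker {S : Type*} [MulZeroClass S] {M : Matrix ι ι S}
    (hM : IsSubmonomial M) {N : Matrix κ κ S} (hN : IsSubmonomial N) :
    IsSubmonomial (M ⊗ₖ N) := by
  constructor
  · rintro ⟨i, k⟩ ⟨j, l⟩ ⟨j', l'⟩ h h'
    exact Prod.ext (hM.1 i j j' (left_ne_zero_of_mul h) (left_ne_zero_of_mul h'))
      (hN.1 k l l' (right_ne_zero_of_mul h) (right_ne_zero_of_mul h'))
  · rintro ⟨i, k⟩ ⟨i', k'⟩ ⟨j, l⟩ h h'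
    exact Prod.ext (hM.2 i i' j (left_ne_zero_of_mul h) (left_ne_zero_of_mul h'))
      (hN.2 k k' l (right_ne_zero_of_mul h) (right_ne_zero_of_mul h'))

theorem IsSubmonomial.mul_apply {S : Type*} [NonUnitalNonAssocSemiring S] [Fintype ι]
    {M : Matrix ι ι S} (hM : IsSubmonomial M) {p r : ι} (hpr : M p r ≠ 0) (N : Matrix ι ι S)
    (q : ι) : (M * N) p q = M p r * N r q := by
  refine Finset.sum_eq_single r (fun x _ hx => ?_) (by simp)
  by_contra h
  exact hx (hM.1 p x r (left_ne_zero_of_mul h) hpr)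

end Submonomial

section WordMat

variable {ι S S' : Type*} [Fintype ι] [DecidableEq ι] [Semiring S]

def wordMat (μ : α → Matrix ι ι S) (w : List α) : Matrix ι ι S :=
  (w.map μ).prod

@[simp] theorem wordMat_nil (μ : α → Matrix ι ι S) : wordMat μ [] = 1 :=
  rfl

@[simp] theorem wordMat_cons (μ : α → Matrix ι ι S) (a : α) (w : List α) :
    wordMat μ (a :: w) = μ a * wordMat μ w :=
  List.prod_cons

theorem map_wordMat [Semiring S'] (φ : S →+* S') (μ : α → Matrix ι ι S) (w : List α) :
    (wordMat μ w).map φ = wordMat (fun a => (μ a).map φ) w := by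
  refine (map_list_prod φ.mapMatrix _).trans ?_
  rw [List.map_map]
  rfl

end WordMat

/-- States range over an arbitrary finite type, so that sums and products of automata need no
reindexing to `Fin n`. -/
structure GenWA (S : Type) [Semiring S] (α : Type) where
  ι : Type
  [fintype : Fintype ι]
  [decEq : DecidableEq ι]
  init : ι → S
  trans : α → Matrix ι ι S
  final : ι → S

attribute [instance] GenWA.fintype GenWA.decEq

namespace GenWA

variable {S : Type} [Semiring S]

def series (A : GenWA S α) (w : List α) : S :=
  A.init ⬝ᵥ wordMat A.trans w *ᵥ A.final

def Reversible (A : GenWA S α) : Prop :=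
  ∀ a, IsSubmonomial (A.trans a)

noncomputable def toWA (A : GenWA S α) : WA S α :=
  ⟨Fintype.card A.ι, A.init ∘ (Fintype.equivFin A.ι).symm,
    fun a => reindex (Fintype.equivFin A.ι) (Fintype.equivFin A.ι) (A.trans a),
    A.final ∘ (Fintype.equivFin A.ι).symm⟩

theorem toWA_series (A : GenWA S α) : A.toWA.series = A.series := by
  funext w
  set e := Fintype.equivFin A.ι
  have hmat : A.toWA.matWord w = reindex e e (wordMat A.trans w) := by
    refine ((map_list_prod (reindexRingEquiv S e) _).trans ?_).symm
    rw [List.map_map]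
    rfl
  rw [WA.series, hmat]
  change (A.init ∘ e.symm) ⬝ᵥ (wordMat A.trans w).submatrix e.symm e.symm *ᵥ (A.final ∘ e.symm) = _
  rw [submatrix_mulVec_equiv, comp_equiv_symm_dotProduct, Equiv.symm_symm]
  simp only [Function.comp_assoc, Equiv.symm_comp_self, Function.comp_id]
  rfl

theorem toWA_reversible {A : GenWA S α} (hA : A.Reversible) : A.toWA.Reversible :=
  fun a => (hA a).submatrix _

end GenWA

def WA.toGenWA {S : Type} [Semiring S] (A : WA S α) : GenWA S α :=
  ⟨Fin A.n, A.init, A.trans, A.final⟩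

theorem mem_Rev_iff {S : Type} [Semiring S] {r : List α → S} :
    r ∈ Rev S α ↔ ∃ A : GenWA S α, A.Reversible ∧ A.series = r := by
  constructor
  · rintro ⟨A, hA, rfl⟩
    exact ⟨A.toGenWA, hA, rfl⟩
  · rintro ⟨A, hA, rfl⟩
    exact ⟨A.toWA, A.toWA_reversible hA, A.toWA_series⟩

theorem dotProduct_kronecker_mulVec {ι κ R : Type*} [Fintype ι] [Fintype κ] [CommSemiring R]
    (x u : ι → R) (y v : κ → R) (M : Matrix ι ι R) (N : Matrix κ κ R) :
    (fun p : ι × κ => x p.1 * y p.2) ⬝ᵥ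
        M ⊗ₖ N *ᵥ (fun p : ι × κ => u p.1 * v p.2) =
      (x ⬝ᵥ M *ᵥ u) * (y ⬝ᵥ N *ᵥ v) := by
  simp only [dotProduct, mulVec, kroneckerMap_apply, Fintype.sum_prod_type, Finset.sum_mul_sum]
  refine Finset.sum_congr rfl fun p _ => Finset.sum_congr rfl fun q _ => ?_
  simp only [Finset.mul_sum, Finset.sum_mul]
  rw [Finset.sum_comm]
  refine Finset.sum_congr rfl fun r _ => ?_
  refine Finset.sum_congr rfl fun s _ => ?_
  ring

namespace GenWA

section Semiring

variable {R : Type} [Semiring R]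

abbrev zero : GenWA R α :=
  ⟨Empty, 0, 0, 0⟩

abbrev one : GenWA R α :=
  ⟨Unit, 1, 1, 1⟩

abbrev add (A B : GenWA R α) : GenWA R α :=
  ⟨A.ι ⊕ B.ι, Sum.elim A.init B.init, fun a => fromBlocks (A.trans a) 0 0 (B.trans a),
    Sum.elim A.final B.final⟩

theorem zero_series : (zero : GenWA R α).series = 0 :=
  funext fun _ => zero_dotProduct _

theorem one_series : (one : GenWA R α).series = 1 := by
  funext w
  have : wordMat (one : GenWA R α).trans w = 1 := by
    induction w with
    | nil => rfl
    | cons a w ih => rw [wordMat_cons, ih, mul_one]; rfl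
  rw [series, this, one_mulVec]
  simp [dotProduct]

theorem add_series (A B : GenWA R α) : (A.add B).series = A.series + B.series := by
  funext w
  have : wordMat (A.add B).trans w = fromBlocks (wordMat A.trans w) 0 0 (wordMat B.trans w) := by
    induction w with
    | nil => exact fromBlocks_one.symm
    | cons a w ih =>
      rw [wordMat_cons, ih, wordMat_cons, wordMat_cons]
      simp [fromBlocks_multiply]
  rw [series, this]
  simp [fromBlocks_mulVec, sumElim_dotProduct_sumElim, series]

theorem zero_reversible : (zero : GenWA R α).Reversible :=
  fun _ => isSubmonomial_of_subsingleton (ι := Empty) _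

theorem one_reversible : (one : GenWA R α).Reversible :=
  fun _ => isSubmonomial_of_subsingleton (ι := Unit) _

theorem Reversible.add {A B : GenWA R α} (hA : A.Reversible) (hB : B.Reversible) :
    (A.add B).Reversible :=
  fun a => (hA a).fromBlocks (hB a)

end Semiring

section Ring

variable {R : Type} [Ring R]

abbrev neg (A : GenWA R α) : GenWA R α :=
  { A with final := -A.final }

theorem neg_series (A : GenWA R α) : A.neg.series = -A.series := by
  funext w
  change A.init ⬝ᵥ wordMat A.trans w *ᵥ -A.final = _
  rw [mulVec_neg, dotProduct_neg]
  rfl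

theorem Reversible.neg {A : GenWA R α} (hA : A.Reversible) : A.neg.Reversible :=
  hA

end Ring

section CommSemiring

variable {R : Type} [CommSemiring R]

abbrev mul (A B : GenWA R α) : GenWA R α :=
  ⟨A.ι × B.ι, fun p => A.init p.1 * B.init p.2,
    fun a => A.trans a ⊗ₖ B.trans a, fun p => A.final p.1 * B.final p.2⟩

theorem mul_series (A B : GenWA R α) : (A.mul B).series = A.series * B.series := by
  funext w
  have : wordMat (A.mul B).trans w = wordMat A.trans w ⊗ₖ wordMat B.trans w := by
    induction w with
    | nil => exact one_kronecker_one.symm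
    | cons a w ih =>
      rw [wordMat_cons, ih, wordMat_cons, wordMat_cons]
      exact (mul_kronecker_mul _ _ _ _).symm
  simp only [series, this]
  exact dotProduct_kronecker_mulVec _ _ _ _ _ _

theorem Reversible.mul {A B : GenWA R α} (hA : A.Reversible) (hB : B.Reversible) :
    (A.mul B).Reversible :=
  fun a => (hA a).kronecker (hB a)

end CommSemiring

end GenWA

def revSubring (R : Type) [CommRing R] (α : Type) : Subring (List α → R) where
  carrier := Rev R α
  zero_mem' := mem_Rev_iff.2 ⟨.zero, GenWA.zero_reversible, GenWA.zero_series⟩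
  one_mem' := mem_Rev_iff.2 ⟨.one, GenWA.one_reversible, GenWA.one_series⟩
  add_mem' := by
    rintro _ _ hr hs
    obtain ⟨A, hA, rfl⟩ := mem_Rev_iff.1 hr
    obtain ⟨B, hB, rfl⟩ := mem_Rev_iff.1 hs
    exact mem_Rev_iff.2 ⟨A.add B, hA.add hB, GenWA.add_series A B⟩
  neg_mem' := by
    rintro _ hr
    obtain ⟨A, hA, rfl⟩ := mem_Rev_iff.1 hr
    exact mem_Rev_iff.2 ⟨A.neg, hA.neg, GenWA.neg_series A⟩
  mul_mem' := by
    rintro _ _ hr hs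
    obtain ⟨A, hA, rfl⟩ := mem_Rev_iff.1 hr
    obtain ⟨B, hB, rfl⟩ := mem_Rev_iff.1 hs
    exact mem_Rev_iff.2 ⟨A.mul B, hA.mul hB, GenWA.mul_series A B⟩

theorem sum_boole_eq_ite_exists {ι S : Type*} [Fintype ι] [AddCommMonoidWithOne S]
    {P : ι → Prop} [DecidablePred P] (hP : ∀ x y, P x → P y → x = y) :
    (∑ x, if P x then (1 : S) else 0) = if ∃ x, P x then 1 else 0 := by
  split_ifs with h
  · obtain ⟨x, hx⟩ := h
    rw [Finset.sum_eq_single x (fun y _ hy => if_neg fun h => hy (hP y x h hx)) (by simp),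
      if_pos hx]
  · exact Finset.sum_eq_zero fun x _ => if_neg fun hx => h ⟨x, hx⟩

attribute [instance] RevNFA.fintypeQ

namespace RevNFA

variable (A : RevNFA α)

theorem path_nil_iff {p q : A.Q} : A.Path p [] q ↔ p = q :=
  ⟨fun h => by cases h; rfl, fun h => h ▸ .nil p⟩

theorem path_cons_iff {p q : A.Q} {a : α} {w : List α} :
    A.Path p (a :: w) q ↔ ∃ r, A.δ p a r ∧ A.Path r w q :=
  ⟨fun h => by cases h with | cons hd hp => exact ⟨_, hd, hp⟩,
    fun ⟨_, hd, hp⟩ => .cons hd hp⟩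

theorem Path.unique {A : RevNFA α} {p q q' : A.Q} {w : List α} (h : A.Path p w q)
    (h' : A.Path p w q') : q = q' := by
  induction h with
  | nil => exact (A.path_nil_iff.1 h')
  | cons hd _ ih =>
    obtain ⟨r, hd', hp'⟩ := A.path_cons_iff.1 h'
    exact ih (A.det _ _ _ _ hd' hd ▸ hp')

def langFrom (p : A.Q) : Set (List α) :=
  {w | ∃ q ∈ A.F, A.Path p w q}

theorem lang_eq_biUnion : A.lang = ⋃ p ∈ A.I, A.langFrom p := by
  ext w
  simp [lang, langFrom]

open Classical in
noncomputable abbrev toGenWA (S : Type) [Semiring S] (p₀ : A.Q) : GenWA S α :=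
  ⟨A.Q, Pi.single p₀ 1, fun a p q => if A.δ p a q then 1 else 0, A.F.indicator 1⟩

theorem toGenWA_reversible (S : Type) [Semiring S] (p₀ : A.Q) :
    (A.toGenWA S p₀).Reversible := by
  intro a
  have hδ {p q} (h : (A.toGenWA S p₀).trans a p q ≠ 0) : A.δ p a q := by
    by_contra hpq
    exact h (if_neg hpq)
  exact ⟨fun p q q' h h' => A.det p a q q' (hδ h) (hδ h'),
    fun p p' q h h' => A.codet p p' a q (hδ h) (hδ h')⟩

open Classical in
theorem wordMat_toGenWA (S : Type) [Semiring S] (p₀ p q : A.Q) (w : List α) :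
    wordMat (A.toGenWA S p₀).trans w p q = if A.Path p w q then 1 else 0 := by
  induction w generalizing p with
  | nil =>
    rw [wordMat_nil, one_apply]
    exact if_congr A.path_nil_iff.symm rfl rfl
  | cons a w ih =>
    rw [wordMat_cons, mul_apply]
    simp only [ih, ite_zero_mul_ite_zero, mul_one, A.path_cons_iff]
    exact sum_boole_eq_ite_exists fun r r' h h' => A.det p a r r' h.1 h'.1

open Classical in
theorem toGenWA_series (S : Type) [Semiring S] (p₀ : A.Q) :
    (A.toGenWA S p₀).series = charSeries S (A.langFrom p₀) := by
  funext w
  have hterm (q : A.Q) : wordMat (A.toGenWA S p₀).trans w p₀ q * A.F.indicator 1 q =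
      if A.Path p₀ w q ∧ q ∈ A.F then 1 else 0 := by
    rw [wordMat_toGenWA, Set.indicator_apply, Pi.one_apply, ite_zero_mul_ite_zero, mul_one]
  rw [GenWA.series, single_dotProduct, one_mul]
  refine (Fintype.sum_congr _ _ hterm).trans ?_
  rw [sum_boole_eq_ite_exists fun q q' h h' => h.1.unique h'.1]
  exact if_congr (by simp [langFrom, and_comm]) rfl rfl

end RevNFA

section CharSeries

variable {R : Type} [Ring R] {L K : Set (List α)}

theorem charSeries_empty : charSeries R (∅ : Set (List α)) = 0 :=
  Set.indicator_empty _

theorem charSeries_univ : charSeries R (Set.univ : Set (List α)) = 1 :=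
  Set.indicator_univ _

theorem charSeries_inter : charSeries R (L ∩ K) = charSeries R L * charSeries R K :=
  Set.inter_indicator_one

theorem charSeries_compl : charSeries R Lᶜ = 1 - charSeries R L :=
  Set.indicator_compl _ _

theorem charSeries_union :
    charSeries R (L ∪ K) = charSeries R L + charSeries R K - charSeries R L * charSeries R K := by
  funext w
  by_cases hL : w ∈ L <;> by_cases hK : w ∈ K <;> simp [charSeries, hL, hK]

theorem supp_charSeries [Nontrivial R] (L : Set (List α)) : supp (charSeries R L) = L := by
  ext w
  by_cases hL : w ∈ L <;> simp [supp, charSeries, hL]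

theorem charSeries_mem_of_boolClosure {C : Set (Set (List α))} (P : Subring (List α → R))
    (hC : ∀ L ∈ C, charSeries R L ∈ P) (hL : BoolClosure C L) : charSeries R L ∈ P := by
  induction hL with
  | base h => exact hC _ h
  | empty => exact charSeries_empty (R := R) ▸ P.zero_mem
  | univ => exact charSeries_univ (R := R) ▸ P.one_mem
  | union _ _ hL hK =>
    exact charSeries_union (R := R) ▸ P.sub_mem (P.add_mem hL hK) (P.mul_mem hL hK)
  | inter _ _ hL hK => exact charSeries_inter (R := R) ▸ P.mul_mem hL hK
  | compl _ hL => exact charSeries_compl (R := R) ▸ P.sub_mem P.one_mem hL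

end CharSeries

theorem charSeries_mem_Rev_of_boolClosure {R : Type} [CommRing R]
    {L : Set (List α)} (hL : BoolClosure (RevLB α) L) : charSeries R L ∈ Rev R α := by
  refine charSeries_mem_of_boolClosure (revSubring R α) ?_ hL
  rintro _ ⟨A, rfl⟩
  rw [A.lang_eq_biUnion]
  refine charSeries_mem_of_boolClosure (C := Set.range A.langFrom) (revSubring R α) ?_
    (.biUnion (Set.toFinite _) fun p _ => .base ⟨p, rfl⟩)
  rintro _ ⟨p, rfl⟩
  exact mem_Rev_iff.2 ⟨A.toGenWA R p, A.toGenWA_reversible R p, A.toGenWA_series R p⟩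

theorem list_prod_mem_pow {S : Type*} [CommSemiring S] {I : Ideal S} {l : List S}
    (hl : ∀ x ∈ l, x ∈ I) : l.prod ∈ I ^ l.length := by
  induction l with
  | nil => simp
  | cons x l ih =>
    rw [List.prod_cons, List.length_cons, pow_succ']
    exact Ideal.mul_mem_mul (hl x List.mem_cons_self)
      (ih fun y hy => hl y (List.mem_cons_of_mem x hy))

theorem length_lt_of_prod_ne_zero {S : Type*} [CommSemiring S] {I : Ideal S} {N : ℕ}
    (hN : I ^ N = ⊥) {l : List S} (hl : ∀ x ∈ l, x ∈ I) (h : l.prod ≠ 0) : l.length < N := by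
  by_contra hle
  exact h (by simpa [hN] using Ideal.pow_le_pow_right (not_lt.1 hle) (list_prod_mem_pow hl))

theorem exists_maximalIdeal_pow_eq_bot (S : Type*) [CommRing S] [IsLocalRing S] [Finite S] :
    ∃ N, maximalIdeal S ^ N = ⊥ :=
  (isArtinianRing_iff_isNilpotent_maximalIdeal S).1 inferInstance

theorem exists_ne_zero_of_mul_apply_ne_zero {ι S : Type*} [Fintype ι]
    [NonUnitalNonAssocSemiring S] {M N : Matrix ι ι S} {p q : ι} (h : (M * N) p q ≠ 0) :
    ∃ r, M p r ≠ 0 := by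
  obtain ⟨r, -, hr⟩ := Finset.exists_ne_zero_of_sum_ne_zero h
  exact ⟨r, left_ne_zero_of_mul hr⟩

section Tracking

variable {ι S : Type} [CommRing S]

instance {N : ℕ} [Finite S] : Finite {l : List S // l.length ≤ N} :=
  (List.finite_length_le S N).to_subtype

/-- A state `(p, u, l)` of the tracking automaton stands for the weight `u * l.prod` of a
run ending in `p`: unit weights are multiplied into `u`, non-unit weights are pushed onto `l`.
Both moves can be undone knowing the letter, which makes the automaton reversible. -/
abbrev TrackState (ι S : Type) [CommRing S] (N : ℕ) : Type :=
  ι × Sˣ × {l : List S // l.length ≤ N}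

def trackValue {N : ℕ} (x : TrackState ι S N) : S :=
  x.2.1 * x.2.2.1.prod

def trackStep (μ : α → Matrix ι ι S) (N : ℕ) : TrackState ι S N → α → TrackState ι S N → Prop
  | (p, u, l), a, (q, v, l') =>
    μ a p q ≠ 0 ∧
      (IsUnit (μ a p q) ∧ (v : S) = u * μ a p q ∧ l' = l ∨
        ¬IsUnit (μ a p q) ∧ v = u ∧ l'.1 = μ a p q :: l.1)

variable {μ : α → Matrix ι ι S} {N : ℕ}

theorem trackStep_det (hμ : ∀ a, IsSubmonomial (μ a)) {x y y' : TrackState ι S N} {a : α}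
    (h : trackStep μ N x a y) (h' : trackStep μ N x a y') : y = y' := by
  obtain ⟨p, u, l⟩ := x
  obtain ⟨q, v, m⟩ := y
  obtain ⟨q', v', m'⟩ := y'
  obtain ⟨hpq, h⟩ := h
  obtain ⟨hpq', h'⟩ := h'
  obtain rfl := (hμ a).1 p q q' hpq hpq'
  rcases h with ⟨hd, hv, rfl⟩ | ⟨hd, rfl, hm⟩ <;> rcases h' with ⟨hd', hv', rfl⟩ | ⟨hd', rfl, hm'⟩
  · rw [Units.ext (hv.trans hv'.symm)]
  · exact absurd hd hd'
  · exact absurd hd' hd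
  · rw [Subtype.ext (hm.trans hm'.symm)]

theorem trackStep_codet (hμ : ∀ a, IsSubmonomial (μ a)) {x x' y : TrackState ι S N} {a : α}
    (h : trackStep μ N x a y) (h' : trackStep μ N x' a y) : x = x' := by
  obtain ⟨p, u, l⟩ := x
  obtain ⟨p', u', l'⟩ := x'
  obtain ⟨q, v, m⟩ := y
  obtain ⟨hpq, h⟩ := h
  obtain ⟨hpq', h'⟩ := h'
  obtain rfl := (hμ a).2 p p' q hpq hpq'
  rcases h with ⟨hd, hv, rfl⟩ | ⟨hd, rfl, hm⟩ <;> rcases h' with ⟨hd', hv', hm'⟩ | ⟨hd', rfl, hm'⟩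
  · rw [Units.ext (hd.mul_right_cancel (hv.symm.trans hv')), hm']
  · exact absurd hd hd'
  · exact absurd hd' hd
  · rw [Subtype.ext (List.cons_injective (hm.symm.trans hm'))]

theorem trackValue_of_trackStep {x y : TrackState ι S N} {a : α} (h : trackStep μ N x a y) :
    trackValue y = trackValue x * μ a x.1 y.1 := by
  obtain ⟨p, u, l⟩ := x
  obtain ⟨q, v, m⟩ := y
  rcases h.2 with ⟨-, hv, rfl⟩ | ⟨-, rfl, hm⟩
  · simp only [trackValue, hv]
    ring
  · simp only [trackValue, hm, List.prod_cons]
    ring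

theorem exists_trackStep [IsLocalRing S] (hN : maximalIdeal S ^ N = ⊥) {x : TrackState ι S N}
    (hx : ∀ d ∈ x.2.2.1, ¬IsUnit d) {a : α} {r : ι} (hr : μ a x.1 r ≠ 0)
    (hval : trackValue x * μ a x.1 r ≠ 0) :
    ∃ y : TrackState ι S N, y.1 = r ∧ (∀ d ∈ y.2.2.1, ¬IsUnit d) ∧ trackStep μ N x a y := by
  obtain ⟨p, u, l⟩ := x
  by_cases hd : IsUnit (μ a p r)
  · exact ⟨(r, u * hd.unit, l), rfl, hx, hr, .inl ⟨hd, rfl, rfl⟩⟩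
  · have hl : ∀ d ∈ μ a p r :: l.1, ¬IsUnit d := List.forall_mem_cons.2 ⟨hd, hx⟩
    have hlen : (μ a p r :: l.1).length ≤ N := by
      refine (length_lt_of_prod_ne_zero hN (fun d h => (mem_maximalIdeal d).2 (hl d h)) ?_).le
      rw [List.prod_cons]
      exact fun h0 => hval (by simp only [trackValue]; linear_combination (u : S) * h0)
    exact ⟨(r, u, ⟨_, hlen⟩), rfl, hl, hr, .inr ⟨hd, rfl, rfl⟩⟩

variable [Fintype ι] [DecidableEq ι]

noncomputable def trackNFA [Finite S] (hμ : ∀ a, IsSubmonomial (μ a)) (N : ℕ) (i j : ι) (c : S) :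
    RevNFA α where
  Q := TrackState ι S N
  fintypeQ := Fintype.ofFinite _
  δ := trackStep μ N
  I := {(i, 1, ⟨[], Nat.zero_le N⟩)}
  F := {y | y.1 = j ∧ trackValue y = c}
  det _ _ _ _ := trackStep_det hμ
  codet _ _ _ _ := trackStep_codet hμ

variable [Finite S] {i j : ι} {c : S}

theorem trackValue_of_path (hμ : ∀ a, IsSubmonomial (μ a)) {x y : TrackState ι S N} {w : List α}
    (h : (trackNFA hμ N i j c).Path x w y) : trackValue y = trackValue x * wordMat μ w x.1 y.1 := by
  induction w generalizing x with
  | nil =>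
    obtain rfl := RevNFA.path_nil_iff _ |>.1 h
    simp
  | cons a w ih =>
    obtain ⟨r, hxr, hry⟩ := RevNFA.path_cons_iff _ |>.1 h
    rw [ih hry, trackValue_of_trackStep hxr, wordMat_cons, (hμ a).mul_apply hxr.1, mul_assoc]

theorem exists_path_of_trackValue_mul_ne_zero [IsLocalRing S]
    (hμ : ∀ a, IsSubmonomial (μ a)) (hN : maximalIdeal S ^ N = ⊥)
    {x : TrackState ι S N} (hx : ∀ d ∈ x.2.2.1, ¬IsUnit d) {w : List α} {q : ι}
    (hw : trackValue x * wordMat μ w x.1 q ≠ 0) :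
    ∃ y, y.1 = q ∧ (trackNFA hμ N i j c).Path x w y := by
  induction w generalizing x with
  | nil =>
    refine ⟨x, ?_, RevNFA.path_nil_iff _ |>.2 rfl⟩
    by_contra hxq
    exact hw (by rw [wordMat_nil, one_apply_ne hxq, mul_zero])
  | cons a w ih =>
    rw [wordMat_cons] at hw
    obtain ⟨r, hr⟩ := exists_ne_zero_of_mul_apply_ne_zero (right_ne_zero_of_mul hw)
    rw [(hμ a).mul_apply hr, ← mul_assoc] at hw
    obtain ⟨y, rfl, hy, hxy⟩ := exists_trackStep hN hx hr (left_ne_zero_of_mul hw)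
    obtain ⟨z, hz, hyz⟩ := ih hy (by rwa [trackValue_of_trackStep hxy])
    exact ⟨z, hz, RevNFA.path_cons_iff _ |>.2 ⟨y, hxy, hyz⟩⟩

theorem trackNFA_lang [IsLocalRing S] (hμ : ∀ a, IsSubmonomial (μ a))
    (hN : maximalIdeal S ^ N = ⊥) (hc : c ≠ 0) :
    (trackNFA hμ N i j c).lang = (fun w => wordMat μ w i j) ⁻¹' {c} := by
  ext w
  constructor
  · rintro ⟨_, rfl, y, ⟨hyj, hy⟩, h⟩
    rw [Set.mem_preimage, Set.mem_singleton_iff, ← hy, trackValue_of_path hμ h, ← hyj]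
    simp [trackValue]
  · intro hw
    rw [Set.mem_preimage, Set.mem_singleton_iff] at hw
    obtain ⟨y, hyj, h⟩ := exists_path_of_trackValue_mul_ne_zero (i := i) (j := j) (c := c) hμ hN
      (x := (i, 1, ⟨[], Nat.zero_le N⟩)) (w := w) (q := j) (by simp)
      (by simpa [trackValue, hw] using hc)
    refine ⟨_, rfl, y, ⟨hyj, ?_⟩, h⟩
    rw [trackValue_of_path hμ h, hyj]
    simpa [trackValue] using hw

theorem preimage_wordMat_mem_RevLB [IsLocalRing S] (hμ : ∀ a, IsSubmonomial (μ a)) (hc : c ≠ 0) :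
    (fun w => wordMat μ w i j) ⁻¹' {c} ∈ RevLB α :=
  have ⟨N, hN⟩ := exists_maximalIdeal_pow_eq_bot S
  ⟨trackNFA hμ N i j c, trackNFA_lang hμ hN hc⟩

end Tracking

section FiniteRing

variable {ι S : Type} [Fintype ι] [DecidableEq ι] [CommRing S] [Finite S]
  {μ : α → Matrix ι ι S}

theorem boolClosure_preimage_wordMat_of_isLocalRing [IsLocalRing S]
    (hμ : ∀ a, IsSubmonomial (μ a)) (i j : ι) (c : S) :
    BoolClosure (RevLB α) ((fun w => wordMat μ w i j) ⁻¹' {c}) :=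
  .preimage_singleton _ 0 (fun _ hc => .base (preimage_wordMat_mem_RevLB hμ hc)) c

theorem boolClosure_preimage_wordMat (hμ : ∀ a, IsSubmonomial (μ a)) (i j : ι) (c : S) :
    BoolClosure (RevLB α) ((fun w => wordMat μ w i j) ⁻¹' {c}) := by
  let φ (m : MaximalSpectrum S) : S →+* Localization.AtPrime m.asIdeal := algebraMap _ _
  have hfib : (fun w => wordMat μ w i j) ⁻¹' {c} = ⋂ m ∈ (Set.univ : Set (MaximalSpectrum S)),
      (fun w => wordMat (fun a => (μ a).map (φ m)) w i j) ⁻¹' {φ m c} := by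
    ext w
    simp only [Set.mem_preimage, Set.mem_singleton_iff, Set.mem_iInter, ← map_wordMat, map_apply]
    exact ⟨fun h m _ => h ▸ rfl,
      fun h => MaximalSpectrum.toPiLocalization_injective S (funext fun m => h m trivial)⟩
  rw [hfib]
  refine .biInter (Set.toFinite _) fun m _ => ?_
  have : Finite (Localization.AtPrime m.asIdeal) :=
    .of_surjective _ (IsArtinianRing.localization_surjective m.asIdeal.primeCompl _)
  exact boolClosure_preimage_wordMat_of_isLocalRing (fun a => (hμ a).map (map_zero _)) i j _

theorem boolClosure_supp_series {A : WA S α} (hA : A.Reversible) :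
    BoolClosure (RevLB α) (supp A.series) := by
  have hsupp : supp A.series = A.matWord ⁻¹' {X | A.init ⬝ᵥ X *ᵥ A.final ≠ 0} := rfl
  rw [hsupp]
  refine .preimage _ (Set.toFinite _) fun X _ => ?_
  have hfib : A.matWord ⁻¹' {X} = ⋂ pq ∈ (Set.univ : Set (Fin A.n × Fin A.n)),
      (fun w => wordMat A.trans w pq.1 pq.2) ⁻¹' {X pq.1 pq.2} := by
    ext w
    simp only [Set.mem_preimage, Set.mem_singleton_iff, Set.mem_iInter, Set.mem_univ,
      forall_const, Prod.forall]
    exact Matrix.ext_iff.symm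
  rw [hfib]
  exact .biInter (Set.toFinite _) fun pq _ => boolClosure_preimage_wordMat hA pq.1 pq.2 _

end FiniteRing

def WA.map {S S' : Type} [Semiring S] [Semiring S'] (φ : S →+* S') (A : WA S α) : WA S' α :=
  ⟨A.n, φ ∘ A.init, fun a => (A.trans a).map φ, φ ∘ A.final⟩

theorem WA.series_map {S S' : Type} [Semiring S] [Semiring S'] (φ : S →+* S') (A : WA S α)
    (w : List α) : (A.map φ).series w = φ (A.series w) := by
  have hmat : (A.map φ).matWord w = (A.matWord w).map φ := (map_wordMat φ A.trans w).symm
  rw [WA.series, WA.series, hmat, RingHom.map_dotProduct]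
  congr 1
  funext p
  exact (RingHom.map_mulVec φ _ _ p).symm

theorem exists_finite_subring_superset {R : Type} [Ring R]
    (hlf : ∀ s : Finset R, ((Subring.closure (s : Set R) : Subring R) : Set R).Finite)
    {s : Set R} (hs : s.Finite) : ∃ T : Subring R, Finite T ∧ s ⊆ T := by
  refine ⟨Subring.closure hs.toFinset, (hlf hs.toFinset).to_subtype, ?_⟩
  simp [Subring.subset_closure]

theorem boolClosure_of_mem_RevL {R : Type} [CommRing R] [Finite α]
    (hlf : ∀ s : Finset R, ((Subring.closure (s : Set R) : Subring R) : Set R).Finite)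
    {L : Set (List α)} (hL : L ∈ RevL R α) : BoolClosure (RevLB α) L := by
  obtain ⟨_, ⟨A, hA, rfl⟩, rfl⟩ := hL
  obtain ⟨T, hTfin, hT⟩ := exists_finite_subring_superset hlf (s := Set.range A.init ∪
    Set.range (fun x : α × Fin A.n × Fin A.n => A.trans x.1 x.2.1 x.2.2) ∪ Set.range A.final)
    (by simp [Set.finite_range])
  let A' : WA T α := ⟨A.n, fun p => ⟨A.init p, hT (.inl (.inl ⟨p, rfl⟩))⟩,
    fun a => of fun p q => ⟨A.trans a p q, hT (.inl (.inr ⟨(a, p, q), rfl⟩))⟩,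
    fun p => ⟨A.final p, hT (.inr ⟨p, rfl⟩)⟩⟩
  have hAA' : A = A'.map T.subtype := rfl
  have hsupp : supp A.series = supp A'.series := by
    ext w
    simp [supp, hAA', WA.series_map]
  rw [hsupp]
  exact boolClosure_supp_series fun a =>
    IsSubmonomial.of_map (M := A'.trans a) (f := T.subtype) (hA a) fun x hx => Subtype.ext hx

end RevWA

open RevWA in
theorem stmt18_general (R : Type) [CommRing R] (hR : (0 : R) ≠ 1)
    (hlf : ∀ s : Finset R, ((Subring.closure (s : Set R) : Subring R) : Set R).Finite)
    (α : Type) [Fintype α] :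
    RevL R α = {L : Set (List α) | BoolClosure (RevLB α) L} := by
  have : Nontrivial R := ⟨⟨0, 1, hR⟩⟩
  ext L
  exact ⟨boolClosure_of_mem_RevL hlf,
    fun hL => ⟨_, charSeries_mem_Rev_of_boolClosure hL, supp_charSeries L⟩⟩

open RevWA in
theorem stmt18 (R : Type) [CommRing R] (hR : (0 : R) ≠ 1)
    (hlf : ∀ s : Finset R, ((Subring.closure (s : Set R) : Subring R) : Set R).Finite)
    (α : Type) [Fintype α] [Nonempty α] :
    RevL R α = {L : Set (List α) | BoolClosure (RevLB α) L} :=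
  stmt18_general R hR hlf α
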